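/- arXiv:2603.05251 — 2 statements merged into one kernel-verified Lean document; each statement's English description precedes it below -/
import Mathlib

section
/- Let C > 0, α > 0, Lx > 0, Ly > 0, d > 0 be real numbers. Then (1/(Lx·Ly)) ∫₀^{Lx} ∫₀^{Ly} log₂( C · e^{−α·x} / (y² + d²) ) dy dx = log₂(C) − (α·Lx/2)·log₂(e) − [ log₂(Ly² + d²) − (2/ln 2)·(1 − (d/Ly)·arctan(Ly/d)) ]. -/
/-!
The integrand splits as `f x - g y` with `f x = log₂ C - α x log₂ e` affine in `x` and
`g y = log₂ (y² + d²)`, so the mean over the rectangle is the mean of `f` over `[0, Lx]` minus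
the mean of `g` over `[0, Ly]`. The latter comes from the antiderivative
`y log (y² + d²) - 2 y + 2 d arctan (y / d)` of `log (y² + d²)`.
-/

open Real

theorem intervalIntegral.integral_integral_sub {f g : ℝ → ℝ} {a b c e : ℝ}
    (hf : IntervalIntegrable f MeasureTheory.volume a b)
    (hg : IntervalIntegrable g MeasureTheory.volume c e) :
    ∫ x in a..b, ∫ y in c..e, (f x - g y)
      = (e - c) * (∫ x in a..b, f x) - (b - a) * ∫ y in c..e, g y := by
  have inner : ∀ x, ∫ y in c..e, (f x - g y) = (e - c) * f x - ∫ y in c..e, g y := fun x => by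
    rw [intervalIntegral.integral_sub intervalIntegrable_const hg,
      intervalIntegral.integral_const, smul_eq_mul]
  simp_rw [inner]
  rw [intervalIntegral.integral_sub (hf.const_mul _) intervalIntegrable_const,
    intervalIntegral.integral_const_mul, intervalIntegral.integral_const, smul_eq_mul, mul_comm]

theorem hasDerivAt_log_sq_add_sq {d : ℝ} (hd : d ≠ 0) (y : ℝ) :
    HasDerivAt (fun y => y * log (y ^ 2 + d ^ 2) - 2 * y + 2 * d * arctan (y / d))
      (log (y ^ 2 + d ^ 2)) y := by
  have hpos : 0 < y ^ 2 + d ^ 2 := by positivity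
  have hlog : HasDerivAt (fun y => log (y ^ 2 + d ^ 2)) (2 * y / (y ^ 2 + d ^ 2)) y := by
    simpa using (((hasDerivAt_pow 2 y).add_const (d ^ 2)).log hpos.ne')
  have harctan : HasDerivAt (fun y => arctan (y / d)) (1 / (1 + (y / d) ^ 2) * (1 / d)) y := by
    simpa using ((hasDerivAt_id y).div_const d).arctan
  refine ((((hasDerivAt_id y).mul hlog).sub ((hasDerivAt_id y).const_mul 2)).add
    (harctan.const_mul (2 * d))).congr_deriv ?_
  simp only [id]
  field_simp
  ring

theorem integral_log_sq_add_sq {d : ℝ} (hd : d ≠ 0) (L : ℝ) :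
    ∫ y in (0 : ℝ)..L, log (y ^ 2 + d ^ 2)
      = L * log (L ^ 2 + d ^ 2) - 2 * L + 2 * d * arctan (L / d) := by
  have hcont : Continuous fun y : ℝ => log (y ^ 2 + d ^ 2) :=
    (by fun_prop : Continuous fun y : ℝ => y ^ 2 + d ^ 2).log fun y => by positivity
  rw [intervalIntegral.integral_eq_sub_of_hasDerivAt (fun y _ => hasDerivAt_log_sq_add_sq hd y)
    (hcont.intervalIntegrable 0 L)]
  simp

theorem integral_logb_sq_add_sq {d : ℝ} (hd : d ≠ 0) (L : ℝ) :
    ∫ y in (0 : ℝ)..L, logb 2 (y ^ 2 + d ^ 2)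
      = (L * log (L ^ 2 + d ^ 2) - 2 * L + 2 * d * arctan (L / d)) / log 2 := by
  simp only [logb]
  rw [intervalIntegral.integral_div, integral_log_sq_add_sq hd]

theorem logb_mul_exp_div {C d : ℝ} (hC : C ≠ 0) (hd : d ≠ 0) (t y : ℝ) :
    logb 2 (C * exp t / (y ^ 2 + d ^ 2))
      = (logb 2 C + t * logb 2 (exp 1)) - logb 2 (y ^ 2 + d ^ 2) := by
  simp only [logb]
  rw [log_div (by positivity) (by positivity), log_mul hC (exp_ne_zero t), log_exp, log_exp]
  ring

theorem sf_pas_single_waveguide_ergodic_rate_general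
    (C α Lx Ly d : ℝ) (hC : 0 < C) (hLx : 0 < Lx) (hLy : 0 < Ly)
    (hd : 0 < d) :
    (1 / (Lx * Ly)) *
      ∫ x in (0:ℝ)..Lx, ∫ y in (0:ℝ)..Ly,
        Real.logb 2 (C * Real.exp (-α * x) / (y ^ 2 + d ^ 2))
    = Real.logb 2 C - (α * Lx / 2) * Real.logb 2 (Real.exp 1)
      - (Real.logb 2 (Ly ^ 2 + d ^ 2)
          - (2 / Real.log 2) * (1 - (d / Ly) * Real.arctan (Ly / d))) := by
  have hlogb : Continuous fun y : ℝ => logb 2 (y ^ 2 + d ^ 2) :=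
    (by fun_prop : Continuous fun y : ℝ => y ^ 2 + d ^ 2).logb fun y => by positivity
  simp_rw [logb_mul_exp_div hC.ne' hd.ne']
  rw [intervalIntegral.integral_integral_sub ((by fun_prop : Continuous _).intervalIntegrable _ _)
    (hlogb.intervalIntegrable 0 Ly), integral_logb_sq_add_sq hd.ne',
    intervalIntegral.integral_add intervalIntegrable_const
      ((by fun_prop : Continuous _).intervalIntegrable _ _), intervalIntegral.integral_const, intervalIntegral.integral_mul_const,
    intervalIntegral.integral_const_mul, integral_id]
  have hlog2 : log 2 ≠ 0 := (log_pos one_lt_two).ne'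
  simp only [logb, log_exp, smul_eq_mul, sub_zero]
  field_simp
  ring

theorem sf_pas_single_waveguide_ergodic_rate
    (C α Lx Ly d : ℝ) (hC : 0 < C) (hα : 0 < α) (hLx : 0 < Lx) (hLy : 0 < Ly)
    (hd : 0 < d) :
    (1 / (Lx * Ly)) *
      ∫ x in (0:ℝ)..Lx, ∫ y in (0:ℝ)..Ly,
        Real.logb 2 (C * Real.exp (-α * x) / (y ^ 2 + d ^ 2))
    = Real.logb 2 C - (α * Lx / 2) * Real.logb 2 (Real.exp 1)
      - (Real.logb 2 (Ly ^ 2 + d ^ 2)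
          - (2 / Real.log 2) * (1 - (d / Ly) * Real.arctan (Ly / d))) :=
  sf_pas_single_waveguide_ergodic_rate_general C α Lx Ly d hC hLx hLy hd
end

section
/- Let C > 0, α > 0, Lx > 0, Ly > 0, d > 0 and N ≥ 1, and set yₙ = (2n − 1)·Ly/(2N) for n = 1, …, N. Then (1/(Lx·Ly)) ∫₀^{Lx} ∫₀^{Ly} log₂( C · e^{−α·min(x, Lx−x)} · ( Σ_{n=1}^N 1/√((y − yₙ)² + d²) )² ) dy dx ≤ log₂(C) − (α·Lx/4)·log₂(e) + 2·log₂( (1/Ly) Σ_{n=1}^N [ arsinh((Ly − yₙ)/d) + arsinh(yₙ/d) ] ), where arsinh(x) = ln(x + √(x² + 1)). -/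
/-! The integrand splits as `logb C - α · min(x, Lx - x) · logb e + 2 · logb S(y)`, with
`S(y) = ∑ₙ 1/√((y - yₙ)² + d²)`, so the double integral separates. The `x`-part is computed
exactly (`∫₀^Lx min(x, Lx - x) dx = Lx²/4`); for the `y`-part, concavity of the logarithm (Jensen,
here via the tangent line at the mean) bounds the mean of `logb S` by `logb` of the mean of `S`,
and `∫ 1/√((y - c)² + d²) dy` is a difference of `arsinh`s. -/

open Real Finset intervalIntegral
open MeasureTheory (volume)

lemma continuous_one_div_sqrt_sq_add_sq (c : ℝ) {d : ℝ} (hd : d ≠ 0) :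
    Continuous fun y : ℝ => 1 / √((y - c) ^ 2 + d ^ 2) :=
  continuous_const.div (by fun_prop) fun y => (sqrt_pos.mpr (by positivity)).ne'

lemma hasDerivAt_arsinh_sub_div (c : ℝ) {d : ℝ} (hd : 0 < d) (y : ℝ) :
    HasDerivAt (fun y => arsinh ((y - c) / d)) (1 / √((y - c) ^ 2 + d ^ 2)) y := by
  have hinner : HasDerivAt (fun y : ℝ => (y - c) / d) (1 / d) y := by
    simpa using ((hasDerivAt_id y).sub_const c).div_const d
  refine ((hasDerivAt_arsinh _).comp y hinner).congr_deriv ?_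
  have hscale : 1 + ((y - c) / d) ^ 2 = ((y - c) ^ 2 + d ^ 2) / d ^ 2 := by
    field_simp
    ring
  have hsqrt_pos : 0 < √((y - c) ^ 2 + d ^ 2) := sqrt_pos.mpr (by positivity)
  rw [hscale, sqrt_div (by positivity), sqrt_sq hd.le]
  field_simp

lemma integral_one_div_sqrt_sq_add_sq (a b c : ℝ) {d : ℝ} (hd : 0 < d) :
    ∫ y in a..b, 1 / √((y - c) ^ 2 + d ^ 2) = arsinh ((b - c) / d) - arsinh ((a - c) / d) :=
  integral_eq_sub_of_hasDerivAt (fun y _ => hasDerivAt_arsinh_sub_div c hd y)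
    ((continuous_one_div_sqrt_sq_add_sq c hd.ne').intervalIntegrable a b)

lemma integral_zero_sum_one_div_sqrt_sq_add_sq {ι : Type*} (s : Finset ι) (c : ι → ℝ) (L : ℝ)
    {d : ℝ} (hd : 0 < d) :
    ∫ y in (0 : ℝ)..L, ∑ n ∈ s, 1 / √((y - c n) ^ 2 + d ^ 2)
      = ∑ n ∈ s, (arsinh ((L - c n) / d) + arsinh (c n / d)) := by
  rw [integral_finsetSum fun n _ =>
    (continuous_one_div_sqrt_sq_add_sq (c n) hd.ne').intervalIntegrable 0 L]
  refine sum_congr rfl fun n _ => ?_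
  rw [integral_one_div_sqrt_sq_add_sq _ _ _ hd, zero_sub, neg_div, arsinh_neg, sub_neg_eq_add]

lemma integral_min_sub_self {L : ℝ} (hL : 0 ≤ L) :
    ∫ x in (0 : ℝ)..L, min x (L - x) = L ^ 2 / 4 := by
  have hint : ∀ a b : ℝ, IntervalIntegrable (fun x => min x (L - x)) volume a b := fun a b =>
    (continuous_id.min (continuous_const.sub continuous_id)).intervalIntegrable a b
  have hleft : ∫ x in (0 : ℝ)..(L / 2), min x (L - x) = ∫ x in (0 : ℝ)..(L / 2), x := by
    refine integral_congr fun x hx => min_eq_left ?_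
    rw [Set.uIcc_of_le (by linarith)] at hx
    linarith [hx.2]
  have hright : ∫ x in (L / 2)..L, min x (L - x) = ∫ x in (L / 2)..L, (L - x) := by
    refine integral_congr fun x hx => min_eq_right ?_
    rw [Set.uIcc_of_le (by linarith)] at hx
    linarith [hx.1]
  rw [← integral_add_adjacent_intervals (hint 0 (L / 2)) (hint (L / 2) L), hleft, hright,
    integral_sub intervalIntegrable_const intervalIntegral.intervalIntegrable_id, integral_id,
    integral_id, integral_const, smul_eq_mul]
  ring

lemma integral_const_add_mul_min_sub_self (a b : ℝ) {L : ℝ} (hL : 0 ≤ L) :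
    ∫ x in (0 : ℝ)..L, (a + b * min x (L - x)) = L * a + b * (L ^ 2 / 4) := by
  rw [integral_add intervalIntegrable_const (Continuous.intervalIntegrable (by fun_prop) _ _),
    integral_const_mul, integral_const, integral_min_sub_self hL, smul_eq_mul, sub_zero]

theorem integral_log_le_mul_log_average {f : ℝ → ℝ} {a b : ℝ} (hab : a < b)
    (hf : ContinuousOn f (Set.Icc a b)) (hpos : ∀ y ∈ Set.Icc a b, 0 < f y) :
    ∫ y in a..b, log (f y) ≤ (b - a) * log ((∫ y in a..b, f y) / (b - a)) := by
  have hf_int : IntervalIntegrable f volume a b := hf.intervalIntegrable_of_Icc hab.le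
  have hI_pos : 0 < ∫ y in a..b, f y :=
    intervalIntegral_pos_of_pos_on hf_int (fun y hy => hpos y (Set.Ioo_subset_Icc_self hy)) hab
  set m := (∫ y in a..b, f y) / (b - a) with hm
  have hm_pos : 0 < m := div_pos hI_pos (sub_pos.mpr hab)
  have htangent : ∀ y ∈ Set.Icc a b, log (f y) ≤ (log m - 1) + f y / m := fun y hy => by
    have := log_le_sub_one_of_pos (div_pos (hpos y hy) hm_pos)
    rw [log_div (hpos y hy).ne' hm_pos.ne'] at this
    linarith
  calc ∫ y in a..b, log (f y)
      ≤ ∫ y in a..b, ((log m - 1) + f y / m) :=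
        integral_mono_on hab.le ((hf.log fun y hy => (hpos y hy).ne').intervalIntegrable_of_Icc
          hab.le) (intervalIntegrable_const.add (hf_int.div_const m)) htangent
    _ = (b - a) * (log m - 1) + (∫ y in a..b, f y) / m := by
        rw [integral_add intervalIntegrable_const (hf_int.div_const m), integral_const,
          integral_div, smul_eq_mul]
    _ = (b - a) * log m := by
        rw [hm, div_div_cancel₀ hI_pos.ne']
        ring

theorem integral_logb_le_mul_logb_average {β : ℝ} (hβ : 1 ≤ β) {f : ℝ → ℝ} {a b : ℝ}
    (hab : a < b) (hf : ContinuousOn f (Set.Icc a b)) (hpos : ∀ y ∈ Set.Icc a b, 0 < f y) :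
    ∫ y in a..b, logb β (f y) ≤ (b - a) * logb β ((∫ y in a..b, f y) / (b - a)) := by
  simp only [logb, integral_div, ← mul_div_assoc]
  exact div_le_div_of_nonneg_right (integral_log_le_mul_log_average hab hf hpos)
    (log_nonneg hβ)

theorem integral_integral_add {g h : ℝ → ℝ} {a b c d : ℝ} (hg : IntervalIntegrable g volume a b)
    (hh : IntervalIntegrable h volume c d) :
    ∫ x in a..b, ∫ y in c..d, (g x + h y)
      = (d - c) * (∫ x in a..b, g x) + (b - a) * ∫ y in c..d, h y := by
  simp only [integral_add intervalIntegrable_const hh, integral_const, smul_eq_mul]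
  rw [integral_add (hg.const_mul _) intervalIntegrable_const, integral_const_mul, integral_const,
    smul_eq_mul]

lemma logb_mul_exp_mul_sq (β : ℝ) {C s : ℝ} (hC : C ≠ 0) (hs : s ≠ 0) (t : ℝ) :
    logb β (C * exp t * s ^ 2) = logb β C + t * logb β (exp 1) + 2 * logb β s := by
  rw [logb_mul (mul_ne_zero hC (exp_pos t).ne') (pow_ne_zero 2 hs),
    logb_mul hC (exp_pos t).ne', logb_pow]
  simp only [logb, log_exp]
  push_cast
  ring

theorem df_pas_multi_waveguide_ergodic_rate_bound_general
    (C α Lx Ly d : ℝ) (hC : 0 < C) (hLx : 0 < Lx) (hLy : 0 < Ly)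
    (hd : 0 < d) (N : ℕ) (hN : 1 ≤ N)
    (Y : ℕ → ℝ) :
    (1 / (Lx * Ly)) *
      ∫ x in (0:ℝ)..Lx, ∫ y in (0:ℝ)..Ly,
        Real.logb 2 (C * Real.exp (-α * min x (Lx - x)) *
          (∑ n ∈ Finset.Icc 1 N, 1 / Real.sqrt ((y - Y n) ^ 2 + d ^ 2)) ^ 2)
    ≤ Real.logb 2 C - (α * Lx / 4) * Real.logb 2 (Real.exp 1)
      + 2 * Real.logb 2
          ((1 / Ly) * ∑ n ∈ Finset.Icc 1 N,
            (Real.arsinh ((Ly - Y n) / d) + Real.arsinh (Y n / d))) := by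
  set S : ℝ → ℝ := fun y => ∑ n ∈ Icc 1 N, 1 / √((y - Y n) ^ 2 + d ^ 2)
  have hS_cont : Continuous S :=
    continuous_finsetSum _ fun n _ => continuous_one_div_sqrt_sq_add_sq (Y n) hd.ne'
  have hS_pos : ∀ y, 0 < S y := fun y => sum_pos (fun n _ => by positivity) (nonempty_Icc.mpr hN)
  have hsplit : ∀ x y, logb 2 (C * exp (-α * min x (Lx - x)) *
        (∑ n ∈ Icc 1 N, 1 / √((y - Y n) ^ 2 + d ^ 2)) ^ 2)
      = (logb 2 C + -α * logb 2 (exp 1) * min x (Lx - x)) + 2 * logb 2 (S y) := fun x y => by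
    rw [logb_mul_exp_mul_sq 2 hC.ne' (hS_pos y).ne']
    ring
  have hlogS_cont : Continuous fun y => 2 * logb 2 (S y) :=
    continuous_const.mul (hS_cont.logb fun y => (hS_pos y).ne')
  have hS_int : ∫ y in (0:ℝ)..Ly, S y
      = ∑ n ∈ Icc 1 N, (arsinh ((Ly - Y n) / d) + arsinh (Y n / d)) :=
    integral_zero_sum_one_div_sqrt_sq_add_sq _ Y Ly hd
  have hjensen := integral_logb_le_mul_logb_average one_le_two hLy hS_cont.continuousOn
    fun y _ => hS_pos y
  rw [sub_zero, hS_int, ← one_div_mul_eq_div] at hjensen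
  simp_rw [hsplit]
  rw [integral_integral_add (Continuous.intervalIntegrable (by fun_prop) _ _)
    (hlogS_cont.intervalIntegrable _ _), integral_const_add_mul_min_sub_self _ _ hLx.le,
    integral_const_mul, sub_zero, sub_zero]
  calc _ = logb 2 C - α * Lx / 4 * logb 2 (exp 1)
        + 2 * ((∫ y in (0:ℝ)..Ly, logb 2 (S y)) / Ly) := by
        field_simp
        ring
    _ ≤ _ := by
        gcongr
        rwa [div_le_iff₀' hLy]

theorem df_pas_multi_waveguide_ergodic_rate_bound
    (C α Lx Ly d : ℝ) (hC : 0 < C) (hα : 0 < α) (hLx : 0 < Lx) (hLy : 0 < Ly)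
    (hd : 0 < d) (N : ℕ) (hN : 1 ≤ N)
    (Y : ℕ → ℝ) (hY : ∀ n, Y n = (2 * (n : ℝ) - 1) * Ly / (2 * N)) :
    (1 / (Lx * Ly)) *
      ∫ x in (0:ℝ)..Lx, ∫ y in (0:ℝ)..Ly,
        Real.logb 2 (C * Real.exp (-α * min x (Lx - x)) *
          (∑ n ∈ Finset.Icc 1 N, 1 / Real.sqrt ((y - Y n) ^ 2 + d ^ 2)) ^ 2)
    ≤ Real.logb 2 C - (α * Lx / 4) * Real.logb 2 (Real.exp 1)
      + 2 * Real.logb 2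
          ((1 / Ly) * ∑ n ∈ Finset.Icc 1 N,
            (Real.arsinh ((Ly - Y n) / d) + Real.arsinh (Y n / d))) :=
  df_pas_multi_waveguide_ergodic_rate_bound_general C α Lx Ly d hC hLx hLy hd N hN Y
end
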